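/- arXiv:2412.17757 — 2 statements merged into one kernel-verified Lean document; each statement's English description precedes it below -/
import Mathlib

section
/- Define γ̃(h) = arccot(sinh h) for h ∈ R and β̃(h) = (γ̃(h−1) − γ̃(h+1))/2 for h > 1. Then the function h ↦ γ̃(h)/γ̃(h+1) is increasing for h > 0, and consequently h ↦ β̃(h)/γ̃(h) is increasing for h > 1. -/
open Real

/-!
Write `γ h = arccot (sinh h)`. Since `γ' = -1 / cosh`, the logarithmic derivative of `γ` is
`-1 / (cosh h * γ h)`, and `cosh h * γ h` is strictly decreasing because its derivative is
`sinh h * γ h - 1 < 0` (from `x * arccot x < 1`, i.e. `arctan y < y` for `y > 0`). So `γ` is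
strictly log-concave, which makes `γ h / γ (h + 1)` strictly increasing. Finally
`2 β̃ h / γ h = γ (h - 1) / γ h - (γ h / γ (h + 1))⁻¹`, an increasing function minus the
reciprocal of a positive increasing one.
-/

/-- arccot : ℝ → (0,π), the inverse cotangent. -/
noncomputable def arccot (x : ℝ) : ℝ := π / 2 - Real.arctan x

section Ratio

variable {f : ℝ → ℝ}

theorem strictMono_div_comp_add_of_strictAnti_logDeriv (hf : Differentiable ℝ f)
    (hpos : ∀ x, 0 < f x) (hlog : StrictAnti (logDeriv f)) {c : ℝ} (hc : 0 < c) :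
    StrictMono fun x => f x / f (x + c) := by
  have hlog_sub : StrictMono fun x => log (f x) - log (f (x + c)) := by
    refine strictMono_of_deriv_pos fun x => ?_
    have hderiv : HasDerivAt (fun x => log (f x) - log (f (x + c)))
        (logDeriv f x - logDeriv f (x + c)) x :=
      ((hf x).hasDerivAt.log (hpos x).ne').sub
        (((hf (x + c)).hasDerivAt.log (hpos (x + c)).ne').comp_add_const x c)
    rw [hderiv.deriv, sub_pos]
    exact hlog (lt_add_of_pos_right x hc)
  convert exp_strictMono.comp hlog_sub using 2 with x
  rw [Function.comp_apply, exp_sub, exp_log (hpos x), exp_log (hpos (x + c))]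

theorem strictMono_sub_div_of_strictMono_div_comp_add (hpos : ∀ x, 0 < f x) {c : ℝ}
    (hr : StrictMono fun x => f x / f (x + c)) :
    StrictMono fun x => (f (x - c) - f (x + c)) / f x := by
  have hsplit : ∀ x, (f (x - c) - f (x + c)) / f x = f (x - c) / f (x - c + c)
      - (f x / f (x + c))⁻¹ := by
    intro x
    rw [sub_add_cancel, inv_div, sub_div]
  intro a b hab
  simp only [hsplit]
  have hinv : (f b / f (b + c))⁻¹ < (f a / f (a + c))⁻¹ :=
    inv_strictAnti₀ (div_pos (hpos a) (hpos _)) (hr hab)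
  linarith [hr (sub_lt_sub_right hab c)]

end Ratio

theorem arccot_pos (x : ℝ) : 0 < arccot x := by
  unfold arccot
  linarith [arctan_lt_pi_div_two x]

theorem mul_arccot_lt_one (x : ℝ) : x * arccot x < 1 := by
  rcases le_or_gt x 0 with hx | hx
  · nlinarith [arccot_pos x]
  · have harccot : arccot x = arctan x⁻¹ := (arctan_inv_of_pos hx).symm
    have hlt : arctan x⁻¹ < x⁻¹ := by
      have := lt_tan (arctan_pos.2 (inv_pos.2 hx)) (arctan_lt_pi_div_two _)
      rwa [tan_arctan] at this
    calc x * arccot x < x * x⁻¹ := by rw [harccot]; exact mul_lt_mul_of_pos_left hlt hx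
      _ = 1 := mul_inv_cancel₀ hx.ne'

theorem hasDerivAt_arccot_sinh (x : ℝ) :
    HasDerivAt (fun h => arccot (sinh h)) (-(cosh x)⁻¹) x := by
  have hval : 1 / (1 + sinh x ^ 2) * cosh x = (cosh x)⁻¹ := by
    rw [← cosh_sq']
    field_simp
  have harctan := ((hasDerivAt_arctan (sinh x)).comp x (hasDerivAt_sinh x)).const_sub (π / 2)
  rwa [hval] at harctan

theorem strictAnti_cosh_mul_arccot_sinh : StrictAnti fun h => cosh h * arccot (sinh h) := by
  refine strictAnti_of_deriv_neg fun x => ?_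
  have hderiv : HasDerivAt (fun h => cosh h * arccot (sinh h))
      (sinh x * arccot (sinh x) + cosh x * -(cosh x)⁻¹) x :=
    (hasDerivAt_cosh x).mul (hasDerivAt_arccot_sinh x)
  rw [hderiv.deriv, mul_neg, mul_inv_cancel₀ (cosh_pos x).ne']
  linarith [mul_arccot_lt_one (sinh x)]

theorem logDeriv_arccot_sinh (x : ℝ) :
    logDeriv (fun h => arccot (sinh h)) x = -(cosh x * arccot (sinh x))⁻¹ := by
  rw [logDeriv_apply, (hasDerivAt_arccot_sinh x).deriv, mul_inv, neg_div, div_eq_mul_inv]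

theorem strictAnti_logDeriv_arccot_sinh : StrictAnti (logDeriv fun h => arccot (sinh h)) := by
  intro a b hab
  simp only [logDeriv_arccot_sinh, neg_lt_neg_iff]
  exact inv_strictAnti₀ (mul_pos (cosh_pos b) (arccot_pos _))
    (strictAnti_cosh_mul_arccot_sinh hab)

/-- With γ̃(h) = arccot(sinh h) and β̃(h) = (γ̃(h-1) - γ̃(h+1))/2,
the function h ↦ γ̃(h)/γ̃(h+1) is (strictly) increasing on (0,∞), and consequently
h ↦ β̃(h)/γ̃(h) is (strictly) increasing on (1,∞). -/
theorem gamma_ratio_strictMono :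
    StrictMonoOn (fun h : ℝ => arccot (Real.sinh h) / arccot (Real.sinh (h + 1)))
      (Set.Ioi (0 : ℝ)) ∧
    StrictMonoOn (fun h : ℝ =>
      ((arccot (Real.sinh (h - 1)) - arccot (Real.sinh (h + 1))) / 2)
        / arccot (Real.sinh h)) (Set.Ioi (1 : ℝ)) := by
  have hdiff : Differentiable ℝ fun h => arccot (sinh h) :=
    fun x => (hasDerivAt_arccot_sinh x).differentiableAt
  have hratio := strictMono_div_comp_add_of_strictAnti_logDeriv hdiff
    (fun _ => arccot_pos _) strictAnti_logDeriv_arccot_sinh one_pos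
  have hbeta := (strictMono_sub_div_of_strictMono_div_comp_add
    (fun _ => arccot_pos _) hratio).div_const two_pos
  refine ⟨hratio.strictMonoOn _, fun a _ b _ hab => ?_⟩
  simpa only [div_right_comm _ (2 : ℝ)] using hbeta hab
end

section
/- Define γ̃(h) = arccot(sinh h) for h ≥ 0 (so γ̃(0) = π/2), β̃(h) = (γ̃(h−1) − γ̃(h+1))/2 for h > 1, and β̃(h) = (π − γ̃(h+1) − γ̃(1−h))/2 for 0 ≤ h ≤ 1. Then for all h ≥ 0: (2/π)·arccos(1/cosh(1)) · γ̃(h) ≤ β̃(h) ≤ sinh(1) · γ̃(h). -/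
open Real

/-- γ̃(h) = arccot(sinh h). -/
noncomputable def gammaT (h : ℝ) : ℝ := arccot (Real.sinh h)

/-- β̃(h) = (γ̃(h-1) - γ̃(h+1))/2 for h > 1 and (π - γ̃(h+1) - γ̃(1-h))/2 for 0 ≤ h ≤ 1. -/
noncomputable def betaT (h : ℝ) : ℝ :=
  if h ≤ 1 then (π - gammaT (h + 1) - gammaT (1 - h)) / 2
  else (gammaT (h - 1) - gammaT (h + 1)) / 2

/-!
Both bounds compare two functions that vanish at infinity. Writing `gd x = arctan (sinh x)` for
the Gudermannian function, `γ̃ = π/2 - gd` and, as `gd` is odd,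
`β̃ h = (gd (h + 1) - gd (h - 1)) / 2` on all of `ℝ`, with `γ̃' = -1 / cosh` and
`β̃' = -sinh 1 sinh h / (cosh² h + sinh² 1)`.
For the upper bound, `sinh 1 · γ̃ - β̃` is antitone because `sinh h cosh h ≤ cosh² h`, hence
nonnegative. For the lower bound, `c = (2/π) arctan (sinh 1)` is chosen so that
`β̃ - c γ̃` vanishes at `0`; its derivative has the sign of the antitone function
`c (cosh² h + sinh² 1) - sinh 1 sinh h cosh h`, so the gap first increases and then decreases
towards its limit `0`, and stays nonnegative on `[0, ∞)`.
-/

open Filter Topology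

lemma nonneg_of_deriv_sign_of_antitone {f f' N : ℝ → ℝ} {a x : ℝ}
    (hf : ∀ x, HasDerivAt f (f' x) x) (hN : Antitone N)
    (hpos : ∀ x, 0 ≤ N x → 0 ≤ f' x) (hneg : ∀ x, N x ≤ 0 → f' x ≤ 0)
    (ha : 0 ≤ f a) (hlim : Tendsto f atTop (𝓝 0)) (hx : a ≤ x) : 0 ≤ f x := by
  have hcont : Continuous f := continuous_iff_continuousAt.2 fun x => (hf x).continuousAt
  rcases le_or_gt 0 (N x) with hNx | hNx
  · have hmono : MonotoneOn f (Set.Icc a x) := by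
      refine monotoneOn_of_hasDerivWithinAt_nonneg (convex_Icc a x) hcont.continuousOn
        (fun y _ => (hf y).hasDerivWithinAt) fun y hy => hpos y ?_
      rw [interior_Icc] at hy
      exact hNx.trans (hN hy.2.le)
    exact ha.trans (hmono (Set.left_mem_Icc.2 hx) (Set.right_mem_Icc.2 hx) hx)
  · have hanti : AntitoneOn f (Set.Ici x) := by
      refine antitoneOn_of_hasDerivWithinAt_nonpos (convex_Ici x) hcont.continuousOn
        (fun y _ => (hf y).hasDerivWithinAt) fun y hy => hneg y ?_
      rw [interior_Ici] at hy
      exact (hN (Set.mem_Ioi.1 hy).le).trans hNx.le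
    refine le_of_tendsto hlim ?_
    filter_upwards [eventually_ge_atTop x] with y hy
    exact hanti Set.self_mem_Ici hy hy

noncomputable def gudermannian (x : ℝ) : ℝ := arctan (sinh x)

lemma gudermannian_neg (x : ℝ) : gudermannian (-x) = -gudermannian x := by
  simp only [gudermannian, sinh_neg, arctan_neg]

lemma hasDerivAt_gudermannian (x : ℝ) : HasDerivAt gudermannian (cosh x)⁻¹ x := by
  refine ((hasDerivAt_arctan (sinh x)).comp x (hasDerivAt_sinh x)).congr_deriv ?_
  rw [← cosh_sq']
  field_simp

lemma gudermannian_lt_pi_div_two (x : ℝ) : gudermannian x < π / 2 := arctan_lt_pi_div_two _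

lemma tendsto_sinh_atTop : Tendsto sinh atTop atTop :=
  tendsto_atTop_atTop_of_monotone sinh_strictMono.monotone fun b =>
    ⟨arsinh b, (sinh_arsinh b).ge⟩

lemma tendsto_gudermannian_atTop : Tendsto gudermannian atTop (𝓝 (π / 2)) :=
  (tendsto_nhds_of_tendsto_nhdsWithin tendsto_arctan_atTop).comp tendsto_sinh_atTop

lemma arccos_inv_cosh {x : ℝ} (hx : 0 ≤ x) : arccos (cosh x)⁻¹ = gudermannian x := by
  have hc := cosh_pos x
  rw [arccos_eq_arctan (inv_pos.2 hc), gudermannian]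
  congr 1
  have h : 1 - (cosh x)⁻¹ ^ 2 = (sinh x / cosh x) ^ 2 := by
    field_simp
    linarith [cosh_sq' x]
  rw [h, sqrt_sq (div_nonneg (sinh_nonneg_iff.2 hx) hc.le)]
  field_simp

lemma cosh_sub_one_mul_cosh_add_one (x : ℝ) :
    cosh (x - 1) * cosh (x + 1) = cosh x ^ 2 + sinh 1 ^ 2 := by
  rw [cosh_sub, cosh_add]
  linear_combination cosh x ^ 2 * cosh_sq' 1 + sinh 1 ^ 2 * cosh_sq x

lemma gammaT_eq (x : ℝ) : gammaT x = π / 2 - gudermannian x := rfl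

lemma betaT_eq (x : ℝ) : betaT x = (gudermannian (x + 1) - gudermannian (x - 1)) / 2 := by
  unfold betaT
  split_ifs
  · rw [gammaT_eq, gammaT_eq, show 1 - x = -(x - 1) by ring, gudermannian_neg]
    ring
  · rw [gammaT_eq, gammaT_eq]
    ring

lemma hasDerivAt_gammaT (x : ℝ) : HasDerivAt gammaT (-(cosh x)⁻¹) x := by
  show HasDerivAt (fun y => π / 2 - gudermannian y) _ x
  exact ((hasDerivAt_const x (π / 2)).sub (hasDerivAt_gudermannian x)).congr_deriv (zero_sub _)

lemma hasDerivAt_betaT (x : ℝ) :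
    HasDerivAt betaT (-(sinh 1 * sinh x) / (cosh x ^ 2 + sinh 1 ^ 2)) x := by
  have hplus := (hasDerivAt_gudermannian (x + 1)).comp_add_const x 1
  have hminus := (hasDerivAt_gudermannian (x - 1)).comp_sub_const x 1
  rw [funext betaT_eq]
  refine ((hplus.sub hminus).div_const 2).congr_deriv ?_
  have hcm := cosh_pos (x - 1)
  have hcp := cosh_pos (x + 1)
  rw [← cosh_sub_one_mul_cosh_add_one]
  field_simp
  rw [cosh_add, cosh_sub]
  ring

lemma gammaT_zero : gammaT 0 = π / 2 := by
  simp [gammaT_eq, gudermannian]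

lemma betaT_zero : betaT 0 = gudermannian 1 := by
  rw [betaT_eq, zero_sub, gudermannian_neg, zero_add]
  ring

lemma tendsto_gammaT_atTop : Tendsto gammaT atTop (𝓝 0) := by
  have h := (tendsto_const_nhds (x := π / 2)).sub tendsto_gudermannian_atTop
  rwa [sub_self] at h

lemma tendsto_betaT_atTop : Tendsto betaT atTop (𝓝 0) := by
  have hplus : Tendsto (fun x => gudermannian (x + 1)) atTop (𝓝 (π / 2)) :=
    tendsto_gudermannian_atTop.comp (tendsto_atTop_add_const_right _ _ tendsto_id)
  have hminus : Tendsto (fun x => gudermannian (x - 1)) atTop (𝓝 (π / 2)) :=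
    tendsto_gudermannian_atTop.comp (tendsto_atTop_add_const_right _ (-1) tendsto_id)
  have h := (hplus.sub hminus).div_const 2
  rwa [sub_self, zero_div, ← funext betaT_eq] at h

lemma betaT_le_sinh_one_mul_gammaT (x : ℝ) : betaT x ≤ sinh 1 * gammaT x := by
  have hderiv (y : ℝ) :
      -(sinh 1 * (cosh y)⁻¹) ≤ -(sinh 1 * sinh y) / (cosh y ^ 2 + sinh 1 ^ 2) := by
    have hcy := cosh_pos y
    have hsy : sinh y * cosh y ≤ cosh y ^ 2 + sinh 1 ^ 2 := by
      nlinarith [mul_pos hcy (exp_pos (-y)), cosh_sub_sinh y, sq_nonneg (sinh 1)]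
    rw [neg_div, neg_le_neg_iff, ← div_eq_mul_inv, div_le_div_iff₀ (by positivity) hcy]
    nlinarith [sinh_pos_iff.2 (zero_lt_one' ℝ)]
  have hanti : Antitone fun y => sinh 1 * gammaT y - betaT y :=
    antitone_of_hasDerivAt_nonpos
      (fun y => ((hasDerivAt_gammaT y).const_mul (sinh 1)).sub (hasDerivAt_betaT y))
      fun y => by simpa only [mul_neg, Pi.zero_apply, sub_nonpos] using hderiv y
  have hlim : Tendsto (fun y => sinh 1 * gammaT y - betaT y) atTop (𝓝 0) := by
    simpa only [mul_zero, sub_zero] using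
      (tendsto_gammaT_atTop.const_mul (sinh 1)).sub tendsto_betaT_atTop
  exact sub_nonneg.1 (hanti.le_of_tendsto hlim x)

lemma antitone_mul_cosh_sq_sub_mul_sinh_mul_cosh {a b d : ℝ} (ha : 0 ≤ a) (hab : a ≤ b) :
    Antitone fun y => a * (cosh y ^ 2 + d) - b * (sinh y * cosh y) := by
  refine antitone_of_hasDerivAt_nonpos (fun y =>
    ((((hasDerivAt_cosh y).pow 2).add_const d).const_mul a).sub
      (((hasDerivAt_sinh y).mul (hasDerivAt_cosh y)).const_mul b)) fun y => ?_
  norm_num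
  nlinarith [mul_nonneg ha (sq_nonneg (cosh y - sinh y)),
    mul_nonneg (sub_nonneg.2 hab) (add_nonneg (sq_nonneg (cosh y)) (sq_nonneg (sinh y)))]

lemma mul_gammaT_le_betaT {c x : ℝ} (hc₀ : 0 ≤ c) (hc : c ≤ sinh 1)
    (h₀ : c * gammaT 0 ≤ betaT 0) (hx : 0 ≤ x) : c * gammaT x ≤ betaT x := by
  set N := fun y => c * (cosh y ^ 2 + sinh 1 ^ 2) - sinh 1 * (sinh y * cosh y)
  have hQ (y : ℝ) : 0 < cosh y * (cosh y ^ 2 + sinh 1 ^ 2) := by positivity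
  have hderiv (y : ℝ) : HasDerivAt (fun y => betaT y - c * gammaT y)
      (N y / (cosh y * (cosh y ^ 2 + sinh 1 ^ 2))) y := by
    refine ((hasDerivAt_betaT y).sub ((hasDerivAt_gammaT y).const_mul c)).congr_deriv ?_
    have := cosh_pos y
    field_simp
    ring
  have hlim : Tendsto (fun y => betaT y - c * gammaT y) atTop (𝓝 0) := by
    simpa only [mul_zero, sub_zero] using
      tendsto_betaT_atTop.sub (tendsto_gammaT_atTop.const_mul c)
  exact sub_nonneg.1 <| nonneg_of_deriv_sign_of_antitone
    (f := fun y => betaT y - c * gammaT y) hderiv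
    (antitone_mul_cosh_sq_sub_mul_sinh_mul_cosh hc₀ hc) (fun y hy => div_nonneg hy (hQ y).le)
    (fun y hy => div_nonpos_of_nonpos_of_nonneg hy (hQ y).le) (sub_nonneg.2 h₀) hlim hx

/-- For all h ≥ 0: (2/π)·arccos(1/cosh 1)·γ̃(h) ≤ β̃(h) ≤ sinh(1)·γ̃(h). -/
theorem betaT_bounds (h : ℝ) (hh : 0 ≤ h) :
    (2 / π) * Real.arccos (1 / Real.cosh 1) * gammaT h ≤ betaT h ∧
    betaT h ≤ Real.sinh 1 * gammaT h := by
  rw [one_div, arccos_inv_cosh zero_le_one]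
  have hc_le_one : 2 / π * gudermannian 1 ≤ 1 := by
    rw [div_mul_eq_mul_div, div_le_one pi_pos]
    linarith [gudermannian_lt_pi_div_two 1]
  have hc_nonneg : 0 ≤ 2 / π * gudermannian 1 :=
    mul_nonneg (by positivity) (arctan_nonneg.2 (sinh_nonneg_iff.2 zero_le_one))
  refine ⟨mul_gammaT_le_betaT hc_nonneg (hc_le_one.trans (self_le_sinh_iff.2 zero_le_one)) ?_ hh,
    betaT_le_sinh_one_mul_gammaT h⟩
  rw [gammaT_zero, betaT_zero]
  field_simp
  exact le_rfl
end
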